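/- Let X ⊂ ℝⁿ be an open bounded domain with Lipschitz boundary, u ∈ W^{1,∞}(X; ℝᵐ), and v ∈ L^∞(X; ℝ^{m×n}). If for every θ ∈ C¹(cl(X) × ℝᵐ; ℝⁿ) one has ∫_X [div_x θ(x, u(x)) + trace(v(x) · D_u θ(x, u(x)))] dx − ∫_{∂X} θ(x, u(x)) · n̂(x) dσ = 0, then v = Du almost everywhere on X. -/

import Mathlib

/-!
Testing the identity with `θ(x, y) = y_j g(x) e_k`, for `g` smooth and compactly supported in `X`,
kills the boundary term and leaves `∫_X v_{jk} g = -∫_X u_j ∂_k g`: `v_{jk}` is the weak derivative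
`∂_k u_j`. A Lipschitz extension of `u` is differentiable almost everywhere (Rademacher), and its
line derivatives are its weak derivatives (integration by parts for Lipschitz functions), so by
uniqueness of weak derivatives `v = Du` almost everywhere on `X`.
-/

open MeasureTheory Set
open scoped ContDiff

theorem setIntegral_eq_integral_of_forall_notMem_tsupport {α : Type*} [TopologicalSpace α]
    [MeasurableSpace α] {μ : Measure α} {U : Set α} {g F : α → ℝ}
    (hgU : tsupport g ⊆ U) (hF : ∀ x ∉ tsupport g, F x = 0) :
    ∫ x in U, F x ∂μ = ∫ x, F x ∂μ :=
  setIntegral_eq_integral_of_forall_compl_eq_zero fun x hx => hF x fun h => hx (hgU h)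

theorem MeasureTheory.LocallyIntegrableOn.integrable_mul_of_tsupport_subset {α : Type*}
    [TopologicalSpace α] [T2Space α] [MeasurableSpace α] [OpensMeasurableSpace α]
    {μ : Measure α} {U : Set α} {f g : α → ℝ} (hf : LocallyIntegrableOn f U μ)
    (hg : Continuous g) (hgc : HasCompactSupport g) (hgU : tsupport g ⊆ U) : Integrable (fun x => f x * g x) μ :=
  ((hf.integrableOn_compact_subset hgU hgc).mul_continuousOn hg.continuousOn
    hgc).integrable_of_forall_notMem_eq_zero fun x hx => by
      rw [image_eq_zero_of_notMem_tsupport hx, mul_zero]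

section WeakDerivative

variable {E : Type*} [NormedAddCommGroup E] [NormedSpace ℝ E] [FiniteDimensional ℝ E]
  [MeasurableSpace E] [BorelSpace E] {μ : Measure E} [μ.IsAddHaarMeasure] {C : NNReal}

theorem LipschitzWith.integral_lineDeriv_mul_eq_neg_integral_mul_fderiv {w g : E → ℝ}
    (hw : LipschitzWith C w) (hg : ContDiff ℝ 1 g) (hgc : HasCompactSupport g) (e : E) :
    ∫ x, lineDeriv ℝ w x e * g x ∂μ = -∫ x, w x * fderiv ℝ g x e ∂μ := by
  obtain ⟨D, hgD⟩ := hg.lipschitzWith_of_hasCompactSupport hgc one_ne_zero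
  rw [hw.integral_lineDeriv_mul_eq hgD hgc, ← integral_neg]
  congr 1 with x
  rw [((hg.differentiable one_ne_zero) x).lineDeriv_eq_fderiv, map_neg, neg_mul, mul_comm]

theorem LipschitzWith.ae_eq_lineDeriv_of_setIntegral_mul_eq {U : Set E} (hU : IsOpen U)
    {w f : E → ℝ} (hw : LipschitzWith C w) (hf : LocallyIntegrableOn f U μ) (e : E)
    (h : ∀ g : E → ℝ, ContDiff ℝ ∞ g → HasCompactSupport g → tsupport g ⊆ U →
      ∫ x in U, f x * g x ∂μ = -∫ x in U, w x * fderiv ℝ g x e ∂μ) :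
    ∀ᵐ x ∂μ, x ∈ U → f x = lineDeriv ℝ w x e := by
  have hL := hw.locallyIntegrable_lineDeriv (μ := μ) e
  refine (hU.ae_eq_zero_of_integral_contDiff_smul_eq_zero (f := fun x => f x - lineDeriv ℝ w x e)
    (hf.sub (hL.locallyIntegrableOn U)) fun g hg hgc hgU => ?_).mono
    fun x hx hxU => sub_eq_zero.1 (hx hxU)
  have hfg : Integrable (fun x => f x * g x) μ :=
    hf.integrable_mul_of_tsupport_subset hg.continuous hgc hgU
  have hLg : Integrable (fun x => lineDeriv ℝ w x e * g x) μ := by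
    simpa only [smul_eq_mul, mul_comm] using
      hL.integrable_smul_left_of_hasCompactSupport hg.continuous hgc
  calc ∫ x, g x • (f x - lineDeriv ℝ w x e) ∂μ
      = ∫ x, f x * g x ∂μ - ∫ x, lineDeriv ℝ w x e * g x ∂μ := by
        rw [← integral_sub hfg hLg]
        congr 1 with x
        rw [smul_eq_mul]
        ring
    _ = 0 := by
      rw [← setIntegral_eq_integral_of_forall_notMem_tsupport hgU fun x hx => by
          rw [image_eq_zero_of_notMem_tsupport hx, mul_zero],
        h g hg hgc hgU,
        hw.integral_lineDeriv_mul_eq_neg_integral_mul_fderiv (hg.of_le (by simp)) hgc,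
        setIntegral_eq_integral_of_forall_notMem_tsupport hgU fun x hx => by
          rw [fderiv_of_notMem_tsupport (𝕜 := ℝ) hx, zero_apply, mul_zero],
        sub_self]

end WeakDerivative

section TestField

variable {ι κ : Type*} [DecidableEq ι]

def coordTestField (j : κ) (k : ι) (g : (ι → ℝ) → ℝ) : (ι → ℝ) × (κ → ℝ) → ι → ℝ :=
  fun q => Pi.single k (q.2 j * g q.1)

variable {j : κ} {k : ι} {g : (ι → ℝ) → ℝ}

theorem coordTestField_apply_self :
    (fun q => coordTestField j k g q k) = fun q => q.2 j * g q.1 := by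
  ext q
  simp [coordTestField]

theorem coordTestField_apply_of_ne {i : ι} (hi : i ≠ k) :
    (fun q => coordTestField j k g q i) = 0 := by
  ext q
  simp [coordTestField, hi]

variable [Fintype ι] [Fintype κ]

theorem contDiff_coordTestField {r : WithTop ℕ∞} (hg : ContDiff ℝ r g) :
    ContDiff ℝ r (coordTestField j k g) :=
  (ContinuousLinearMap.single ℝ (fun _ : ι => ℝ) k).contDiff.comp
    (((contDiff_apply ℝ ℝ j).comp contDiff_snd).mul (hg.comp contDiff_fst))

theorem hasFDerivAt_coordTestField_apply_self (hg : Differentiable ℝ g) (p : (ι → ℝ) × (κ → ℝ)) :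
    HasFDerivAt (fun q => coordTestField j k g q k)
      (p.2 j • (fderiv ℝ g p.1).comp (ContinuousLinearMap.fst ℝ _ _) +
        g p.1 • (ContinuousLinearMap.proj j).comp (ContinuousLinearMap.snd ℝ _ _)) p := by
  rw [coordTestField_apply_self]
  exact ((ContinuousLinearMap.proj j).comp (ContinuousLinearMap.snd ℝ _ _)).hasFDerivAt.mul
    ((hg p.1).hasFDerivAt.comp p hasFDerivAt_fst)

theorem sum_fderiv_coordTestField_inl (hg : Differentiable ℝ g) (p : (ι → ℝ) × (κ → ℝ)) :
    ∑ i, fderiv ℝ (fun q => coordTestField j k g q i) p (Pi.single i 1, 0) =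
      p.2 j * fderiv ℝ g p.1 (Pi.single k 1) := by
  rw [Finset.sum_eq_single k (fun i _ hi => by simp [coordTestField_apply_of_ne hi]) (by simp),
    (hasFDerivAt_coordTestField_apply_self hg p).fderiv]
  simp

theorem sum_mul_fderiv_coordTestField_inr [DecidableEq κ] (hg : Differentiable ℝ g)
    (p : (ι → ℝ) × (κ → ℝ)) (V : κ → ι → ℝ) :
    ∑ i, ∑ l, V l i * fderiv ℝ (fun q => coordTestField j k g q i) p (0, Pi.single l 1) =
      V j k * g p.1 := by
  rw [Finset.sum_eq_single k (fun i _ hi => by simp [coordTestField_apply_of_ne hi]) (by simp),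
    (hasFDerivAt_coordTestField_apply_self hg p).fderiv]
  simp [Pi.single_apply, mul_comm]

end TestField

section DivergenceIdentity

variable {ι κ : Type*} [Fintype ι] [DecidableEq ι] [Fintype κ] [DecidableEq κ]

theorem setIntegral_mul_eq_neg_setIntegral_mul_fderiv_of_divergence_identity
    {X : Set (ι → ℝ)} (hX : IsOpen X) {σ : Measure (ι → ℝ)} (hσ : σ (frontier X)ᶜ = 0)
    {nhat : (ι → ℝ) → ι → ℝ} {u : (ι → ℝ) → κ → ℝ} (hu : ContinuousOn u X)
    {v : (ι → ℝ) → κ → ι → ℝ}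
    (hibp : ∀ θ : (ι → ℝ) × (κ → ℝ) → ι → ℝ, ContDiff ℝ 1 θ →
      (∫ x in X,
          ((∑ i, fderiv ℝ (fun q => θ q i) (x, u x) (Pi.single i 1, 0)) +
            ∑ i, ∑ j, v x j i * fderiv ℝ (fun q => θ q i) (x, u x) (0, Pi.single j 1)))
        - (∫ x, (∑ i, θ (x, u x) i * nhat x i) ∂σ) = 0)
    {j : κ} {k : ι} (hv : LocallyIntegrableOn (fun x => v x j k) X)
    {g : (ι → ℝ) → ℝ} (hg : ContDiff ℝ 1 g) (hgc : HasCompactSupport g) (hgX : tsupport g ⊆ X) :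
    ∫ x in X, v x j k * g x = -∫ x in X, u x j * fderiv ℝ g x (Pi.single k 1) := by
  have hgd : Differentiable ℝ g := hg.differentiable one_ne_zero
  -- `σ` lives on `frontier X`, which misses the open set `X ⊇ tsupport g`.
  have hboundary : ∫ x, (∑ i, coordTestField j k g (x, u x) i * nhat x i) ∂σ = 0 := by
    refine integral_eq_zero_of_ae ?_
    filter_upwards [measure_eq_zero_iff_ae_notMem.1 hσ] with x hx
    have hxX : x ∉ tsupport g := fun h => (hX.frontier_eq ▸ not_not.1 hx).2 (hgX h)
    simp [coordTestField, image_eq_zero_of_notMem_tsupport hxX]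
  have hsum := hibp (coordTestField j k g) (contDiff_coordTestField hg)
  simp only [sum_fderiv_coordTestField_inl hgd, sum_mul_fderiv_coordTestField_inr hgd,
    hboundary, sub_zero] at hsum
  have hug : Integrable (fun x => u x j * fderiv ℝ g x (Pi.single k 1)) :=
    ((continuous_apply j).comp_continuousOn hu).locallyIntegrableOn hX.measurableSet
      |>.integrable_mul_of_tsupport_subset ((hg.continuous_fderiv one_ne_zero).clm_apply
        continuous_const) (hgc.fderiv_apply ℝ _) ((tsupport_fderiv_apply_subset ℝ _).trans hgX)
  have hvg : Integrable (fun x => v x j k * g x) :=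
    hv.integrable_mul_of_tsupport_subset hg.continuous hgc hgX
  rw [integral_add hug.integrableOn hvg.integrableOn] at hsum
  linarith

end DivergenceIdentity

theorem DifferentiableAt.hasFDerivAt_mulVecLin_of_lineDeriv {ι κ : Type*} [Fintype ι]
    [DecidableEq ι] [Fintype κ] {f : (ι → ℝ) → κ → ℝ} {x : ι → ℝ} {A : Matrix κ ι ℝ}
    (hf : DifferentiableAt ℝ f x)
    (hA : ∀ j k, lineDeriv ℝ (fun y => f y j) x (Pi.single k 1) = A j k) :
    HasFDerivAt f (Matrix.mulVecLin A).toContinuousLinearMap x := by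
  convert hf.hasFDerivAt
  refine ContinuousLinearMap.coe_injective ((Pi.basisFun ℝ ι).ext fun k => funext fun j => ?_)
  have hfj : HasFDerivAt (fun y => f y j) ((ContinuousLinearMap.proj j).comp (fderiv ℝ f x)) x :=
    (ContinuousLinearMap.proj (R := ℝ) (φ := fun _ : κ => ℝ) j).hasFDerivAt.comp x hf.hasFDerivAt
  have hAjk := hA j k
  rw [hfj.differentiableAt.lineDeriv_eq_fderiv, hfj.fderiv] at hAjk
  simp [← hAjk]

theorem gradient_of_divergence_identity_general {n m : ℕ}
    (X : Set (Fin n → ℝ)) (hXopen : IsOpen X)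
    (σ : Measure (Fin n → ℝ)) (nhat : (Fin n → ℝ) → (Fin n → ℝ))
    (hσ : σ (frontier X)ᶜ = 0)
    (u : (Fin n → ℝ) → (Fin m → ℝ)) (K : NNReal) (hu : LipschitzOnWith K u (closure X))
    (v : (Fin n → ℝ) → (Fin m → Fin n → ℝ)) (hvm : Measurable v)
    (hvb : ∃ C : ℝ, ∀ᵐ x ∂(volume.restrict X), ‖v x‖ ≤ C)
    (hibp : ∀ θ : (Fin n → ℝ) × (Fin m → ℝ) → (Fin n → ℝ), ContDiff ℝ 1 θ →
      (∫ x in X,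
          ((∑ i, fderiv ℝ (fun q => θ q i) (x, u x) (Pi.single i 1, 0)) +
            ∑ i, ∑ j, v x j i * fderiv ℝ (fun q => θ q i) (x, u x) (0, Pi.single j 1)))
        - (∫ x, (∑ i, θ (x, u x) i * nhat x i) ∂σ) = 0) :
    ∀ᵐ x ∂(volume.restrict X),
      HasFDerivAt u ((Matrix.mulVecLin (Matrix.of (v x))).toContinuousLinearMap) x := by
  obtain ⟨C, hC⟩ := hvb
  obtain ⟨w, hw, huw⟩ := (hu.mono subset_closure).extend_pi
  have hv : ∀ j k, LocallyIntegrableOn (fun x => v x j k) X := fun j k =>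
    locallyIntegrableOn_of_locallyIntegrable_restrict <|
      (memLp_top_of_bound (hvm.eval.eval).aestronglyMeasurable C <| hC.mono fun x hx =>
        (norm_le_pi_norm (v x j) k).trans ((norm_le_pi_norm (v x) j).trans hx)).locallyIntegrable
        le_top
  have hweak : ∀ j k, ∀ᵐ x, x ∈ X → v x j k = lineDeriv ℝ (fun y => w y j) x (Pi.single k 1) :=
    fun j k => ((LipschitzWith.eval j).comp hw).ae_eq_lineDeriv_of_setIntegral_mul_eq hXopen
      (hv j k) _ fun g hg hgc hgX => by
        rw [setIntegral_mul_eq_neg_setIntegral_mul_fderiv_of_divergence_identity hXopen hσ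
          (hu.continuousOn.mono subset_closure) hibp (hv j k) (hg.of_le (by simp)) hgc hgX]
        exact congrArg Neg.neg (setIntegral_congr_fun hXopen.measurableSet fun x hx => by
          rw [huw hx, Function.comp_apply, Function.eval])
  filter_upwards [ae_restrict_of_ae hw.ae_differentiableAt,
    ae_restrict_of_ae (ae_all_iff.2 fun j => ae_all_iff.2 (hweak j)),
    ae_restrict_mem hXopen.measurableSet] with x hwx hvx hxX
  exact (hwx.hasFDerivAt_mulVecLin_of_lineDeriv fun j k => (hvx j k hxX).symm)
    |>.congr_of_eventuallyEq (Filter.eventuallyEq_of_mem (hXopen.mem_nhds hxX) huw)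

/-- Proposition 2.1, "if" direction: if `X ⊂ ℝⁿ` is an open bounded
domain, `u ∈ W^{1,∞}(X;ℝᵐ)` (encoded: `u` is Lipschitz on `X`), `v ∈ L^∞(X;ℝ^{m×n})`,
and for every `θ ∈ C¹(cl(X) × ℝᵐ; ℝⁿ)` the divergence identity
`∫_X [div_x θ(x,u) + tr(v · D_u θ(x,u))] dx − ∫_{∂X} θ(x,u)·n̂ dσ = 0` holds,
then `v = Du` almost everywhere on `X`. The surface measure `σ` on `∂X` and the
outward unit normal `n̂` are encoded via the divergence theorem (`hdivthm`). -/
theorem gradient_of_divergence_identity {n m : ℕ}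
    (X : Set (Fin n → ℝ)) (hXopen : IsOpen X) (hXbdd : Bornology.IsBounded X)
    (σ : Measure (Fin n → ℝ)) (nhat : (Fin n → ℝ) → (Fin n → ℝ))
    (hσ : σ (frontier X)ᶜ = 0)
    (hdivthm : ∀ w : (Fin n → ℝ) → (Fin n → ℝ), ContDiff ℝ 1 w →
      (∫ x in X, ∑ i, fderiv ℝ w x (Pi.single i 1) i) =
        ∫ x, (∑ i, w x i * nhat x i) ∂σ)
    (u : (Fin n → ℝ) → (Fin m → ℝ)) (K : NNReal) (hu : LipschitzOnWith K u (closure X))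
    (v : (Fin n → ℝ) → (Fin m → Fin n → ℝ)) (hvm : Measurable v)
    (hvb : ∃ C : ℝ, ∀ᵐ x ∂(volume.restrict X), ‖v x‖ ≤ C)
    (hibp : ∀ θ : (Fin n → ℝ) × (Fin m → ℝ) → (Fin n → ℝ), ContDiff ℝ 1 θ →
      (∫ x in X,
          ((∑ i, fderiv ℝ (fun q => θ q i) (x, u x) (Pi.single i 1, 0)) +
            ∑ i, ∑ j, v x j i * fderiv ℝ (fun q => θ q i) (x, u x) (0, Pi.single j 1)))
        - (∫ x, (∑ i, θ (x, u x) i * nhat x i) ∂σ) = 0) :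
    ∀ᵐ x ∂(volume.restrict X),
      HasFDerivAt u ((Matrix.mulVecLin (Matrix.of (v x))).toContinuousLinearMap) x :=
  gradient_of_divergence_identity_general X hXopen σ nhat hσ u K hu v hvm hvb hibp
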